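/- Let σ > 0 and γ ≥ 0, and let f_σ(t) = (1/(2σ)) exp(−|t|/σ) be the Laplace density. Then ∫_ℝ ∫_ℝ ∫_ℝ ∫_ℝ 1{u₁ + u₂ − u₃ − u₄ < γ} f_σ(u₁) f_σ(u₂) f_σ(u₃) f_σ(u₄) du₁ du₂ du₃ du₄ = 1 − (exp(−γ/σ)/(96σ³)) (48σ³ + 33σ²γ + 9σγ² + γ³). Equivalently, if four scores Q₁, Q₂, Q₃, Q₄ with Q₁ + Q₂ < Q₃ + Q₄ and margin γ = (Q₃ + Q₄) − (Q₁ + Q₂) are each perturbed by independent Laplace(0,σ) noise, the probability that the perturbed sums preserve the inequality equals the stated expression. -/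

import Mathlib

open Real MeasureTheory Set Filter Topology

/-- The Laplace density with scale `σ`. -/
noncomputable def laplaceDensity (σ t : ℝ) : ℝ :=
  (1 / (2 * σ)) * Real.exp (-|t| / σ)

namespace LapAux

/-- The unit-scale Laplace density. -/
noncomputable def f0 (u : ℝ) : ℝ := (1/2) * Real.exp (-|u|)

/-- A family of piecewise exponential-polynomial functions containing the CDFs of
sums of independent unit Laplace random variables. -/
noncomputable def F (b d e c : ℝ) : ℝ :=
  if 0 ≤ c then 1 - Real.exp (-c) * (1/2 + b*c + d*c^2 + e*c^3)
  else Real.exp c * (1/2 - b*c + d*c^2 - e*c^3)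

lemma F_neg (b d e c : ℝ) : F b d e (-c) = 1 - F b d e c := by
  rcases lt_trichotomy c 0 with h | rfl | h
  · rw [F, F, if_pos (by linarith : (0:ℝ) ≤ -c), if_neg (not_le.mpr h), neg_neg]
    ring
  · simp [F]; norm_num
  · rw [F, F, if_pos h.le, if_neg (by simpa using h)]
    ring

lemma tendsto_aux (c H₀ H₁ H₂ : ℝ) :
    Tendsto (fun u : ℝ => Real.exp (-2*(u-c)) * (H₀ + H₁*(u-c) + H₂*(u-c)^2)) atTop (𝓝 0) := by
  have A : ∀ n : ℕ, Tendsto (fun s : ℝ => s^n * Real.exp (-2*s)) atTop (𝓝 0) := by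
    intro n
    have h := (tendsto_pow_mul_exp_neg_atTop_nhds_zero n).mul
      (Real.tendsto_exp_neg_atTop_nhds_zero)
    rw [mul_zero] at h
    refine h.congr fun s => ?_
    rw [mul_assoc, ← Real.exp_add]
    ring_nf
  have T : Tendsto (fun s : ℝ => Real.exp (-2*s) * (H₀ + H₁*s + H₂*s^2)) atTop (𝓝 0) := by
    have h := (((A 0).const_mul H₀).add ((A 1).const_mul H₁)).add ((A 2).const_mul H₂)
    simp only [mul_zero, add_zero, zero_add] at h
    refine h.congr fun s => ?_
    ring
  have hsub : Tendsto (fun u : ℝ => u - c) atTop atTop :=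
    tendsto_atTop_add_const_right atTop (-c) tendsto_id
  exact T.comp hsub

lemma deriv_aux (c α β δ u : ℝ) :
    HasDerivAt
      (fun u : ℝ =>
        -(Real.exp (-2*(u-c)) * ((α/2+β/4+δ/4) + (β/2+δ/2)*(u-c) + (δ/2)*(u-c)^2)))
      ((α + β*(u-c) + δ*(u-c)^2) * Real.exp (-2*(u-c))) u := by
  have hs : HasDerivAt (fun u : ℝ => u - c) 1 u := (hasDerivAt_id u).sub_const c
  have hlin : HasDerivAt (fun u : ℝ => -2*(u-c)) (-2) u := by
    simpa using hs.const_mul (-2)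
  have hexp := hlin.exp
  have h2 : HasDerivAt (fun u : ℝ => (u - c)^2) (2*(u-c)) u := by
    simpa using hs.fun_pow 2
  have hpoly := ((hs.const_mul (β/2+δ/2)).const_add (α/2+β/4+δ/4)).fun_add (h2.const_mul (δ/2))
  have := (hexp.fun_mul hpoly).fun_neg
  refine this.congr_deriv ?_
  ring

/-- the basic tail integral: integrability -/
lemma tail_integrableOn (c α β δ : ℝ) (hα : 0 ≤ α) (hβ : 0 ≤ β) (hδ : 0 ≤ δ) :
    IntegrableOn (fun u => (α + β*(u-c) + δ*(u-c)^2) * Real.exp (-2*(u-c))) (Ioi c) :=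
  integrableOn_Ioi_deriv_of_nonneg'
    (fun u _ => deriv_aux c α β δ u)
    (fun u hu => by
      have h : (0:ℝ) ≤ u - c := by simp only [mem_Ioi] at hu; linarith
      exact mul_nonneg
        (add_nonneg (add_nonneg hα (mul_nonneg hβ h)) (mul_nonneg hδ (sq_nonneg _)))
        (Real.exp_pos _).le)
    (by simpa using (tendsto_aux c (α/2+β/4+δ/4) (β/2+δ/2) (δ/2)).neg)

/-- the basic tail integral: value -/
lemma tail_integral (c α β δ : ℝ) (hα : 0 ≤ α) (hβ : 0 ≤ β) (hδ : 0 ≤ δ) :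
    ∫ u in Ioi c, (α + β*(u-c) + δ*(u-c)^2) * Real.exp (-2*(u-c)) = α/2 + β/4 + δ/4 := by
  rw [integral_Ioi_of_hasDerivAt_of_nonneg'
    (fun u _ => deriv_aux c α β δ u)
    (fun u hu => by
      have h : (0:ℝ) ≤ u - c := by simp only [mem_Ioi] at hu; linarith
      exact mul_nonneg
        (add_nonneg (add_nonneg hα (mul_nonneg hβ h)) (mul_nonneg hδ (sq_nonneg _)))
        (Real.exp_pos _).le)
    (by simpa using (tendsto_aux c (α/2+β/4+δ/4) (β/2+δ/2) (δ/2)).neg)]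
  simp

lemma f0_neg (u : ℝ) : f0 (-u) = f0 u := by simp [f0]

lemma f0_nonneg (u : ℝ) : 0 ≤ f0 u := by unfold f0; positivity

lemma continuous_f0 : Continuous f0 :=
  continuous_const.mul (Real.continuous_exp.comp continuous_abs.neg)

/-- reflection of integrability -/
lemma integrableOn_comp_neg_Iic {g : ℝ → ℝ} {a : ℝ} (h : IntegrableOn g (Ioi a)) :
    IntegrableOn (fun x => g (-x)) (Iic (-a)) := by
  have h2 := (MeasurePreserving.integrableOn_comp_preimage
    (Measure.measurePreserving_neg (volume : Measure ℝ))
    (Homeomorph.neg ℝ).measurableEmbedding).2 h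
  have hpre : (Neg.neg ⁻¹' Ioi a : Set ℝ) = Iio (-a) := by
    ext x; simp [neg_lt]
  rw [hpre] at h2
  have hres : (volume : Measure ℝ).restrict (Iic (-a)) = volume.restrict (Iio (-a)) :=
    (Measure.restrict_congr_set (Iio_ae_eq_Iic)).symm
  unfold IntegrableOn
  rw [hres]
  exact h2

lemma integrableOn_f0_Ioi : IntegrableOn f0 (Ioi (0:ℝ)) := by
  have h : IntegrableOn (fun x : ℝ => (1/2) * Real.exp (-x)) (Ioi (0:ℝ)) := by
    have := (exp_neg_integrableOn_Ioi (0:ℝ) (one_pos)).const_mul (1/2 : ℝ)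
    simpa [IntegrableOn] using this
  exact h.congr_fun (fun x hx => by
    simp [f0, abs_of_pos (mem_Ioi.mp hx)]) measurableSet_Ioi

lemma integrableOn_f0_Iic : IntegrableOn f0 (Iic (0:ℝ)) := by
  have := integrableOn_comp_neg_Iic integrableOn_f0_Ioi
  simpa [f0_neg] using this

lemma integrable_f0 : Integrable f0 := by
  rw [← integrableOn_univ, ← Iic_union_Ioi (a := (0:ℝ)), integrableOn_union]
  exact ⟨integrableOn_f0_Iic, integrableOn_f0_Ioi⟩

lemma integral_f0_Ioi : ∫ u in Ioi (0:ℝ), f0 u = 1/2 := by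
  rw [setIntegral_congr_fun measurableSet_Ioi
    (fun x hx => by simp [f0, abs_of_pos (mem_Ioi.mp hx)] :
      EqOn f0 (fun x => (1/2) * Real.exp (-x)) (Ioi (0:ℝ)))]
  rw [MeasureTheory.integral_const_mul, integral_exp_neg_Ioi_zero]
  norm_num

lemma integral_f0_Iic : ∫ u in Iic (0:ℝ), f0 u = 1/2 := by
  have h := integral_comp_neg_Iic (0:ℝ) f0
  rw [neg_zero] at h
  calc ∫ u in Iic (0:ℝ), f0 u = ∫ u in Iic (0:ℝ), f0 (-u) := by simp [f0_neg]
    _ = ∫ u in Ioi (0:ℝ), f0 u := h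
    _ = 1/2 := integral_f0_Ioi

lemma integral_f0 : ∫ u, f0 u = 1 := by
  rw [← intervalIntegral.integral_Iic_add_Ioi integrableOn_f0_Iic integrableOn_f0_Ioi,
    integral_f0_Iic, integral_f0_Ioi]
  norm_num

lemma integral_f0_Ioi' (a : ℝ) (ha : 0 ≤ a) :
    ∫ u in Ioi a, f0 u = (1/2) * Real.exp (-a) := by
  rw [setIntegral_congr_fun measurableSet_Ioi
    (fun x hx => by simp [f0, abs_of_pos (lt_of_le_of_lt ha (mem_Ioi.mp hx))] :
      EqOn f0 (fun x => (1/2) * Real.exp (-x)) (Ioi a))]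
  rw [MeasureTheory.integral_const_mul, integral_exp_neg_Ioi]

/-- the innermost (CDF) integral -/
lemma cdf_eq (c : ℝ) : (∫ u, if u < c then f0 u else 0) = F 0 0 0 c := by
  have hind : (fun u => if u < c then f0 u else 0) = (Iio c).indicator f0 := by
    ext u; simp [Set.indicator_apply, mem_Iio]
  rw [hind, MeasureTheory.integral_indicator measurableSet_Iio]
  rcases le_or_gt 0 c with hc | hc
  · have hIci : ∫ u in Ici c, f0 u = (1/2) * Real.exp (-c) := by
      rw [integral_Ici_eq_integral_Ioi]; exact integral_f0_Ioi' c hc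
    have hsplit := intervalIntegral.integral_Iio_add_Ici (b := c) (f := f0) (μ := volume)
      integrable_f0.integrableOn integrable_f0.integrableOn
    rw [integral_f0] at hsplit
    rw [F, if_pos hc]
    linarith [hsplit, hIci]
  · have h1 : ∫ u in Iio c, f0 u = ∫ u in Iic c, f0 u :=
      setIntegral_congr_set Iio_ae_eq_Iic
    have h2 : ∫ u in Iic c, f0 u = ∫ u in Ioi (-c), f0 u := by
      rw [← integral_comp_neg_Iic c f0]
      simp [f0_neg]
    rw [h1, h2, integral_f0_Ioi' (-c) (by linarith), F, if_neg (not_le.mpr hc)]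
    simp; ring
lemma tail0_integrableOn (α β δ : ℝ) (hα : 0 ≤ α) (hβ : 0 ≤ β) (hδ : 0 ≤ δ) :
    IntegrableOn (fun t => (α + β*t + δ*t^2) * Real.exp (-2*t)) (Ioi (0:ℝ)) := by
  have := tail_integrableOn 0 α β δ hα hβ hδ
  simpa using this

lemma tail0_integral (α β δ : ℝ) (hα : 0 ≤ α) (hβ : 0 ≤ β) (hδ : 0 ≤ δ) :
    ∫ t in Ioi (0:ℝ), (α + β*t + δ*t^2) * Real.exp (-2*t) = α/2 + β/4 + δ/4 := by
  have := tail_integral 0 α β δ hα hβ hδ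
  simpa using this

/-- master convolution: nonnegative margin case -/
lemma conv_nonneg (b d : ℝ) (hb : 0 ≤ b) (hd : 0 ≤ d) (c : ℝ) (hc : 0 ≤ c) :
    Integrable (fun u => f0 u * F b d 0 (c - u)) ∧
    ∫ u, f0 u * F b d 0 (c - u) = F (1/4+b/4+d/4) (b/4+d/4) (d/6) c := by
  have hα0 : (0:ℝ) ≤ 1/2 + b*c + d*c^2 := by nlinarith
  have hβ0 : (0:ℝ) ≤ b + 2*d*c := by nlinarith
  -- ====== Piece A : (-∞, 0] ======
  have h1 : IntegrableOn (fun t : ℝ => (1/2)*Real.exp (-t)) (Ioi (0:ℝ)) := by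
    have := (exp_neg_integrableOn_Ioi (0:ℝ) one_pos).const_mul (1/2 : ℝ)
    simpa [IntegrableOn] using this
  have h1val : ∫ t in Ioi (0:ℝ), (1/2)*Real.exp (-t) = 1/2 := by
    rw [MeasureTheory.integral_const_mul, integral_exp_neg_Ioi_zero]; norm_num
  have h2 := (tail0_integrableOn (1/2 + b*c + d*c^2) (b + 2*d*c) d hα0 hβ0 hd).const_mul
    (Real.exp (-c)/2)
  have hgRefl_int : IntegrableOn
      (fun t => (1/2)*Real.exp (-t)
        - (Real.exp (-c)/2) * (((1/2 + b*c + d*c^2) + (b + 2*d*c)*t + d*t^2) * Real.exp (-2*t)))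
      (Ioi (0:ℝ)) := h1.sub h2
  have hgRefl_val : ∫ t in Ioi (0:ℝ),
      ((1/2)*Real.exp (-t)
        - (Real.exp (-c)/2) * (((1/2 + b*c + d*c^2) + (b + 2*d*c)*t + d*t^2) * Real.exp (-2*t)))
      = 1/2 - (Real.exp (-c)/2)*((1/2 + b*c + d*c^2)/2 + (b + 2*d*c)/4 + d/4) := by
    rw [integral_sub h1 h2, h1val, MeasureTheory.integral_const_mul,
      tail0_integral (1/2 + b*c + d*c^2) (b + 2*d*c) d hα0 hβ0 hd]
  have hA_eqOn : EqOn
      (fun x : ℝ => (1/2)*Real.exp (-(-x))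
        - (Real.exp (-c)/2) * (((1/2 + b*c + d*c^2) + (b + 2*d*c)*(-x) + d*(-x)^2)
            * Real.exp (-2*(-x))))
      (fun u => f0 u * F b d 0 (c - u)) (Iic (0:ℝ)) := by
    intro u hu
    have habs : |u| = -u := abs_of_nonpos (mem_Iic.mp hu)
    have hcu : (0:ℝ) ≤ c - u := by have := mem_Iic.mp hu; linarith
    have e1 : Real.exp (-(c - u)) = Real.exp (-c) * Real.exp u := by
      rw [← Real.exp_add]; ring_nf
    have e2 : Real.exp (-2 * -u) = Real.exp u * Real.exp u := by
      rw [← Real.exp_add]; ring_nf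
    simp only [f0, F, if_pos hcu, habs, neg_neg]
    rw [e1, e2]
    ring
  have hA_int : IntegrableOn (fun u => f0 u * F b d 0 (c - u)) (Iic (0:ℝ)) := by
    have h := integrableOn_comp_neg_Iic hgRefl_int
    rw [neg_zero] at h
    exact h.congr_fun hA_eqOn measurableSet_Iic
  have hA_val : ∫ u in Iic (0:ℝ), f0 u * F b d 0 (c - u)
      = 1/2 - (Real.exp (-c)/2)*((1/2 + b*c + d*c^2)/2 + (b + 2*d*c)/4 + d/4) := by
    rw [← setIntegral_congr_fun measurableSet_Iic hA_eqOn]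
    have h := integral_comp_neg_Iic (0:ℝ)
      (fun t => (1/2)*Real.exp (-t)
        - (Real.exp (-c)/2) * (((1/2 + b*c + d*c^2) + (b + 2*d*c)*t + d*t^2) * Real.exp (-2*t)))
    rw [neg_zero] at h
    rw [h, hgRefl_val]
  -- ====== Piece B : (0, c] ======
  have hgB_cont : Continuous (fun u : ℝ => (1/2)*Real.exp (-u)
      - (Real.exp (-c)/2)*((1/2+b*c+d*c^2) - (b+2*d*c)*u + d*u^2)) := by
    fun_prop
  have hB_eqOn : EqOn
      (fun u : ℝ => (1/2)*Real.exp (-u)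
        - (Real.exp (-c)/2)*((1/2+b*c+d*c^2) - (b+2*d*c)*u + d*u^2))
      (fun u => f0 u * F b d 0 (c - u)) (Ioc (0:ℝ) c) := by
    intro u hu
    obtain ⟨hu1, hu2⟩ := hu
    have habs : |u| = u := abs_of_pos hu1
    have hcu : (0:ℝ) ≤ c - u := by linarith
    have e3 : Real.exp (-(c - u)) = Real.exp (-c) * Real.exp u := by
      rw [← Real.exp_add]; ring_nf
    have e4 : Real.exp (-u) * Real.exp u = 1 := by
      rw [← Real.exp_add]; simp
    simp only [f0, F, if_pos hcu, habs]
    rw [e3]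
    linear_combination (Real.exp (-c)/2 * (1/2 + b*(c-u) + d*(c-u)^2)) * e4
  have hB_int : IntegrableOn (fun u => f0 u * F b d 0 (c - u)) (Ioc (0:ℝ) c) :=
    (hgB_cont.integrableOn_Ioc).congr_fun hB_eqOn measurableSet_Ioc
  have hB_val : ∫ u in Ioc (0:ℝ) c, f0 u * F b d 0 (c - u)
      = (1/2)*(1 - Real.exp (-c)) - (Real.exp (-c)/2)*(c/2 + b*c^2/2 + d*c^3/3) := by
    rw [← setIntegral_congr_fun measurableSet_Ioc hB_eqOn,
      ← intervalIntegral.integral_of_le hc]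
    have hderiv : ∀ x ∈ uIcc (0:ℝ) c, HasDerivAt
        (fun u : ℝ => -(1/2)*Real.exp (-u)
          - (Real.exp (-c)/2)*((1/2+b*c+d*c^2)*u - ((b+2*d*c)/2)*u^2 + (d/3)*u^3))
        ((1/2)*Real.exp (-x)
          - (Real.exp (-c)/2)*((1/2+b*c+d*c^2) - (b+2*d*c)*x + d*x^2)) x := by
      intro x _
      have hexp : HasDerivAt (fun u : ℝ => Real.exp (-u)) (-Real.exp (-x)) x := by
        simpa using ((hasDerivAt_id x).neg).exp
      have hp1 : HasDerivAt (fun u : ℝ => u) 1 x := hasDerivAt_id x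
      have hp2 : HasDerivAt (fun u : ℝ => u^2) (2*x) x := by simpa using hasDerivAt_pow 2 x
      have hp3 : HasDerivAt (fun u : ℝ => u^3) (3*x^2) x := by simpa using hasDerivAt_pow 3 x
      have hpoly := ((hp1.const_mul (1/2+b*c+d*c^2)).fun_sub
        (hp2.const_mul ((b+2*d*c)/2))).fun_add (hp3.const_mul (d/3))
      have := (hexp.const_mul (-(1/2) : ℝ)).fun_sub (hpoly.const_mul (Real.exp (-c)/2))
      refine this.congr_deriv ?_
      ring
    rw [intervalIntegral.integral_eq_sub_of_hasDerivAt hderiv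
      (hgB_cont.intervalIntegrable 0 c)]
    simp [Real.exp_zero]
    ring
  -- ====== Piece C : (c, ∞) ======
  have hC_tail := tail_integrableOn c (1/2) b d (by norm_num) hb hd
  have hC_int0 := hC_tail.const_mul (Real.exp (-c)/2)
  have hC_eqOn : EqOn
      (fun u : ℝ => (Real.exp (-c)/2) * ((1/2 + b*(u-c) + d*(u-c)^2) * Real.exp (-2*(u-c))))
      (fun u => f0 u * F b d 0 (c - u)) (Ioi c) := by
    intro u hu
    have hu1 : c < u := mem_Ioi.mp hu
    have habs : |u| = u := abs_of_pos (lt_of_le_of_lt hc hu1)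
    have hcu : ¬ (0:ℝ) ≤ c - u := by push_neg; linarith
    have e5 : Real.exp (-2*(u-c)) * Real.exp (-c) = Real.exp (-u) * Real.exp (c - u) := by
      rw [← Real.exp_add, ← Real.exp_add]; ring_nf
    simp only [f0, F, if_neg hcu, habs]
    linear_combination ((1/2 + b*(u-c) + d*(u-c)^2)/2) * e5
  have hC_int : IntegrableOn (fun u => f0 u * F b d 0 (c - u)) (Ioi c) :=
    IntegrableOn.congr_fun hC_int0 hC_eqOn measurableSet_Ioi
  have hC_val : ∫ u in Ioi c, f0 u * F b d 0 (c - u)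
      = (Real.exp (-c)/2)*((1/2)/2 + b/4 + d/4) := by
    rw [← setIntegral_congr_fun measurableSet_Ioi hC_eqOn,
      MeasureTheory.integral_const_mul, tail_integral c (1/2) b d (by norm_num) hb hd]
  -- ====== assembly ======
  have hBC_union : Ioc (0:ℝ) c ∪ Ioi c = Ioi (0:ℝ) := Ioc_union_Ioi_eq_Ioi hc
  have hIoi_int : IntegrableOn (fun u => f0 u * F b d 0 (c - u)) (Ioi (0:ℝ)) := by
    rw [← hBC_union]
    exact integrableOn_union.mpr ⟨hB_int, hC_int⟩
  have hint : Integrable (fun u => f0 u * F b d 0 (c - u)) := by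
    rw [← integrableOn_univ, ← Iic_union_Ioi (a := (0:ℝ)), integrableOn_union]
    exact ⟨hA_int, hIoi_int⟩
  refine ⟨hint, ?_⟩
  have hIoi_val : ∫ u in Ioi (0:ℝ), f0 u * F b d 0 (c - u)
      = (∫ u in Ioc (0:ℝ) c, f0 u * F b d 0 (c - u)) + ∫ u in Ioi c, f0 u * F b d 0 (c - u) := by
    rw [← hBC_union, setIntegral_union Ioc_disjoint_Ioi_same measurableSet_Ioi hB_int hC_int]
  rw [← intervalIntegral.integral_Iic_add_Ioi hA_int hIoi_int, hIoi_val, hA_val, hB_val, hC_val,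
    F, if_pos hc]
  ring

/-- convolution for arbitrary margin -/
lemma conv (b d : ℝ) (hb : 0 ≤ b) (hd : 0 ≤ d) (c : ℝ) :
    ∫ u, f0 u * F b d 0 (c - u) = F (1/4+b/4+d/4) (b/4+d/4) (d/6) c := by
  rcases le_or_gt 0 c with hc | hc
  · exact (conv_nonneg b d hb hd c hc).2
  · have key := conv_nonneg b d hb hd (-c) (by linarith)
    have h0 : ∫ u, f0 u * F b d 0 (c - u) = ∫ u, f0 (-u) * F b d 0 (c + u) := by
      rw [← MeasureTheory.integral_neg_eq_self (fun u => f0 (-u) * F b d 0 (c + u))]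
      simp only [neg_neg, ← sub_eq_add_neg]
    have h1 : (fun u => f0 (-u) * F b d 0 (c + u))
        = fun u => f0 u - f0 u * F b d 0 (-c - u) := by
      funext u
      rw [f0_neg, show c + u = -(-c - u) by ring, F_neg]
      ring
    rw [h0, h1, integral_sub integrable_f0 key.1, integral_f0, key.2]
    have hF := F_neg (1/4+b/4+d/4) (b/4+d/4) (d/6) (-c)
    rw [neg_neg] at hF
    linarith

/-- convolution, plus form -/
lemma convPlus (b d : ℝ) (hb : 0 ≤ b) (hd : 0 ≤ d) (c : ℝ) :
    ∫ u, f0 u * F b d 0 (c + u) = F (1/4+b/4+d/4) (b/4+d/4) (d/6) c := by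
  rw [← MeasureTheory.integral_neg_eq_self (fun u => f0 u * F b d 0 (c + u))]
  have : (fun u => f0 (-u) * F b d 0 (c + -u)) = fun u => f0 u * F b d 0 (c - u) := by
    funext u; rw [f0_neg, ← sub_eq_add_neg]
  rw [this, conv b d hb hd c]

/-- the four-fold integral at unit scale -/
lemma unit (x : ℝ) :
    (∫ u₄ : ℝ, ∫ u₃ : ℝ, ∫ u₂ : ℝ, ∫ u₁ : ℝ,
        (if u₁ + u₂ - u₃ - u₄ < x then f0 u₁ * f0 u₂ * f0 u₃ * f0 u₄ else 0)) =
    F (33/96) (9/96) (1/96) x := by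
  have step1 : ∀ u₂ u₃ u₄ : ℝ,
      (∫ u₁ : ℝ, if u₁ + u₂ - u₃ - u₄ < x then f0 u₁ * f0 u₂ * f0 u₃ * f0 u₄ else 0)
      = F 0 0 0 (x - u₂ + u₃ + u₄) * (f0 u₂ * f0 u₃ * f0 u₄) := by
    intro u₂ u₃ u₄
    have h : (fun u₁ => if u₁ + u₂ - u₃ - u₄ < x then f0 u₁ * f0 u₂ * f0 u₃ * f0 u₄ else 0)
        = fun u₁ => (if u₁ < x - u₂ + u₃ + u₄ then f0 u₁ else 0) * (f0 u₂ * f0 u₃ * f0 u₄) := by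
      funext u₁
      by_cases hlt : u₁ + u₂ - u₃ - u₄ < x
      · rw [if_pos hlt, if_pos (by linarith)]; ring
      · rw [if_neg hlt, if_neg (fun hlt' => hlt (by linarith)), zero_mul]
    rw [h, MeasureTheory.integral_mul_const, cdf_eq]
  have step2 : ∀ u₃ u₄ : ℝ,
      (∫ u₂ : ℝ, F 0 0 0 (x - u₂ + u₃ + u₄) * (f0 u₂ * f0 u₃ * f0 u₄))
      = F (1/4) 0 0 (x + u₃ + u₄) * (f0 u₃ * f0 u₄) := by
    intro u₃ u₄
    have h : (fun u₂ => F 0 0 0 (x - u₂ + u₃ + u₄) * (f0 u₂ * f0 u₃ * f0 u₄))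
        = fun u₂ => (f0 u₂ * F 0 0 0 ((x + u₃ + u₄) - u₂)) * (f0 u₃ * f0 u₄) := by
      funext u₂
      rw [show x - u₂ + u₃ + u₄ = (x + u₃ + u₄) - u₂ by ring]
      ring
    rw [h, MeasureTheory.integral_mul_const, conv 0 0 le_rfl le_rfl]
    norm_num
  have step3 : ∀ u₄ : ℝ,
      (∫ u₃ : ℝ, F (1/4) 0 0 (x + u₃ + u₄) * (f0 u₃ * f0 u₄))
      = F (5/16) (1/16) 0 (x + u₄) * f0 u₄ := by
    intro u₄
    have h : (fun u₃ => F (1/4) 0 0 (x + u₃ + u₄) * (f0 u₃ * f0 u₄))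
        = fun u₃ => (f0 u₃ * F (1/4) 0 0 ((x + u₄) + u₃)) * f0 u₄ := by
      funext u₃
      rw [show x + u₃ + u₄ = (x + u₄) + u₃ by ring]
      ring
    rw [h, MeasureTheory.integral_mul_const, convPlus (1/4) 0 (by norm_num) le_rfl]
    norm_num
  have step4 :
      (∫ u₄ : ℝ, F (5/16) (1/16) 0 (x + u₄) * f0 u₄)
      = F (33/96) (9/96) (1/96) x := by
    have h : (fun u₄ => F (5/16) (1/16) 0 (x + u₄) * f0 u₄)
        = fun u₄ => f0 u₄ * F (5/16) (1/16) 0 (x + u₄) := by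
      funext u₄; ring
    rw [h, convPlus (5/16) (1/16) (by norm_num) (by norm_num)]
    norm_num
  simp only [step1, step2, step3]
  exact step4

lemma scale {σ : ℝ} (hσ : 0 < σ) (g : ℝ → ℝ) : ∫ x, g x = σ * ∫ x, g (σ * x) := by
  rw [Measure.integral_comp_mul_left g σ, smul_eq_mul,
    abs_of_pos (inv_pos.mpr hσ)]
  field_simp

lemma lapscale {σ : ℝ} (hσ : 0 < σ) (v : ℝ) :
    laplaceDensity σ (σ * v) = σ⁻¹ * f0 v := by
  have h : -|σ * v| / σ = -|v| := by
    rw [abs_mul, abs_of_pos hσ]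
    field_simp
  rw [laplaceDensity, h, f0]
  field_simp

end LapAux

open LapAux in
/-- If four scores whose sums have margin `γ ≥ 0` are each perturbed by independent
Laplace(0, σ) noise, the probability that the perturbed sums preserve the inequality equals
`1 - (e^{-γ/σ}/(96σ³)) (48σ³ + 33σ²γ + 9σγ² + γ³)`. -/
theorem laplace_four_fold_order_preservation (σ γ : ℝ) (hσ : 0 < σ) (hγ : 0 ≤ γ) :
    (∫ u₄ : ℝ, ∫ u₃ : ℝ, ∫ u₂ : ℝ, ∫ u₁ : ℝ,
        (if u₁ + u₂ - u₃ - u₄ < γ then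
          laplaceDensity σ u₁ * laplaceDensity σ u₂ * laplaceDensity σ u₃ * laplaceDensity σ u₄
        else 0)) =
      1 - (Real.exp (-γ / σ) / (96 * σ ^ 3)) *
        (48 * σ ^ 3 + 33 * σ ^ 2 * γ + 9 * σ * γ ^ 2 + γ ^ 3) := by
  have hσ0 : σ ≠ 0 := ne_of_gt hσ
  -- step 1: substitute u₁ = σ v₁
  have h1 : ∀ u₂ u₃ u₄ : ℝ,
      (∫ u₁ : ℝ, if u₁ + u₂ - u₃ - u₄ < γ then
          laplaceDensity σ u₁ * laplaceDensity σ u₂ * laplaceDensity σ u₃ * laplaceDensity σ u₄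
        else 0)
      = σ * ∫ v₁ : ℝ, (if σ*v₁ + u₂ - u₃ - u₄ < γ then
          laplaceDensity σ (σ*v₁) * laplaceDensity σ u₂ * laplaceDensity σ u₃ *
            laplaceDensity σ u₄ else 0) :=
    fun u₂ u₃ u₄ => scale hσ _
  have h2 : ∀ u₃ u₄ : ℝ,
      (∫ u₂ : ℝ, ∫ v₁ : ℝ, (if σ*v₁ + u₂ - u₃ - u₄ < γ then
          laplaceDensity σ (σ*v₁) * laplaceDensity σ u₂ * laplaceDensity σ u₃ *
            laplaceDensity σ u₄ else 0))
      = σ * ∫ v₂ : ℝ, ∫ v₁ : ℝ, (if σ*v₁ + σ*v₂ - u₃ - u₄ < γ then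
          laplaceDensity σ (σ*v₁) * laplaceDensity σ (σ*v₂) * laplaceDensity σ u₃ *
            laplaceDensity σ u₄ else 0) :=
    fun u₃ u₄ => scale hσ _
  have h3 : ∀ u₄ : ℝ,
      (∫ u₃ : ℝ, ∫ v₂ : ℝ, ∫ v₁ : ℝ, (if σ*v₁ + σ*v₂ - u₃ - u₄ < γ then
          laplaceDensity σ (σ*v₁) * laplaceDensity σ (σ*v₂) * laplaceDensity σ u₃ *
            laplaceDensity σ u₄ else 0))
      = σ * ∫ v₃ : ℝ, ∫ v₂ : ℝ, ∫ v₁ : ℝ, (if σ*v₁ + σ*v₂ - σ*v₃ - u₄ < γ then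
          laplaceDensity σ (σ*v₁) * laplaceDensity σ (σ*v₂) * laplaceDensity σ (σ*v₃) *
            laplaceDensity σ u₄ else 0) :=
    fun u₄ => scale hσ _
  have h4 :
      (∫ u₄ : ℝ, ∫ v₃ : ℝ, ∫ v₂ : ℝ, ∫ v₁ : ℝ, (if σ*v₁ + σ*v₂ - σ*v₃ - u₄ < γ then
          laplaceDensity σ (σ*v₁) * laplaceDensity σ (σ*v₂) * laplaceDensity σ (σ*v₃) *
            laplaceDensity σ u₄ else 0))
      = σ * ∫ v₄ : ℝ, ∫ v₃ : ℝ, ∫ v₂ : ℝ, ∫ v₁ : ℝ, (if σ*v₁ + σ*v₂ - σ*v₃ - σ*v₄ < γ then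
          laplaceDensity σ (σ*v₁) * laplaceDensity σ (σ*v₂) * laplaceDensity σ (σ*v₃) *
            laplaceDensity σ (σ*v₄) else 0) :=
    scale hσ _
  have hinner : ∀ v₁ v₂ v₃ v₄ : ℝ,
      (if σ*v₁ + σ*v₂ - σ*v₃ - σ*v₄ < γ then
          laplaceDensity σ (σ*v₁) * laplaceDensity σ (σ*v₂) * laplaceDensity σ (σ*v₃) *
            laplaceDensity σ (σ*v₄) else 0)
      = (σ⁻¹)^4 * (if v₁ + v₂ - v₃ - v₄ < γ/σ then f0 v₁ * f0 v₂ * f0 v₃ * f0 v₄ else 0) := by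
    intro v₁ v₂ v₃ v₄
    have hcond : (σ*v₁ + σ*v₂ - σ*v₃ - σ*v₄ < γ) ↔ (v₁ + v₂ - v₃ - v₄ < γ/σ) := by
      rw [lt_div_iff₀ hσ]
      constructor <;> intro h <;> nlinarith
    by_cases h : v₁ + v₂ - v₃ - v₄ < γ/σ
    · rw [if_pos (hcond.mpr h), if_pos h, lapscale hσ, lapscale hσ, lapscale hσ, lapscale hσ]
      ring
    · rw [if_neg (fun h' => h (hcond.mp h')), if_neg h, mul_zero]
  simp only [h1, MeasureTheory.integral_const_mul, h2, h3, h4, hinner]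
  rw [unit (γ/σ)]
  rw [F, if_pos (by positivity : (0:ℝ) ≤ γ/σ)]
  have hexp : Real.exp (-(γ/σ)) = Real.exp (-γ/σ) := by rw [neg_div]
  rw [hexp]
  field_simp
  ring
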